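/- Given positive radii r_i, r_j, r_k and weights Φ_ij, Φ_jk, Φ_ik ∈ [0, π/2], the following symmetry holds: r_j · ∂θ_i^{jk}/∂r_j = r_i · ∂θ_j^{ik}/∂r_i. -/

import Mathlib

open Real

/-- The edge length assigned to edge `{i,j}` by the circle packing metric with
radii `a`, `b` and weight `φ`. -/
noncomputable def ell (a b φ : ℝ) : ℝ := Real.sqrt (a ^ 2 + b ^ 2 + 2 * a * b * Real.cos φ)

/-- The inner angle of a Euclidean triangle at the vertex whose two adjacent sides
have lengths `x`, `y` and whose opposite side has length `z`. -/
noncomputable def innerAngle (x y z : ℝ) : ℝ :=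
  Real.arccos ((x ^ 2 + y ^ 2 - z ^ 2) / (2 * x * y))

open Filter Topology

/-! Write `A = l_ij²`, `B = l_ik²`, `C = l_jk²` and `Q = 2AB + 2BC + 2CA - A² - B² - C²`, which is
positive by the strict triangle inequalities. Differentiating the cosine law gives
`∂θ_i/∂A = -(A + C - B) / (2A√Q)` and `∂θ_i/∂C = 1/√Q`, while `r_j ∂A/∂r_j = A + r_j² - r_i²` and
`r_j ∂C/∂r_j = C + r_j² - r_k²`. Hence
`r_j ∂θ_i/∂r_j = (A(B + C - A) + A(r_i² + r_j² - 2r_k²) + (r_j² - r_i²)(B - C)) / (2A√Q)`,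
which is invariant under exchanging `i` and `j` (this also exchanges `B` and `C`). -/

/-- Sixteen times the squared area of a triangle with squared side lengths `A`, `B`, `C`. -/
def heron (A B C : ℝ) : ℝ := 2 * A * B + 2 * B * C + 2 * C * A - A ^ 2 - B ^ 2 - C ^ 2

theorem heron_comm_right (A B C : ℝ) : heron A C B = heron A B C := by
  unfold heron; ring

theorem heron_sq (a b c : ℝ) :
    heron (a ^ 2) (b ^ 2) (c ^ 2) = (a + b + c) * (-a + b + c) * (a - b + c) * (a + b - c) := by
  unfold heron; ring

theorem heron_sq_pos {a b c : ℝ} (ha : a < b + c) (hb : b < a + c) (hc : c < a + b) :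
    0 < heron (a ^ 2) (b ^ 2) (c ^ 2) := by
  rw [heron_sq]
  have : 0 < a + b + c := by linarith
  apply mul_pos (mul_pos (mul_pos this _) _) <;> linarith

theorem ell_comm (a b φ : ℝ) : ell a b φ = ell b a φ := by
  unfold ell; ring_nf

theorem ell_sq (a b φ : ℝ) : ell a b φ ^ 2 = a ^ 2 + b ^ 2 + 2 * a * b * cos φ := by
  refine sq_sqrt ?_
  have h : a ^ 2 + b ^ 2 + 2 * a * b * cos φ = (a + b * cos φ) ^ 2 + (b * sin φ) ^ 2 := by
    linear_combination -b ^ 2 * sin_sq_add_cos_sq φ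
  rw [h]; positivity

theorem ell_le_add {a b : ℝ} (ha : 0 ≤ a) (hb : 0 ≤ b) (φ : ℝ) : ell a b φ ≤ a + b :=
  sqrt_le_iff.2 ⟨by positivity, by nlinarith [cos_le_one φ, mul_nonneg ha hb]⟩

theorem lt_ell {a b φ : ℝ} (ha : 0 ≤ a) (hb : 0 < b) (hφ : 0 ≤ cos φ) : a < ell a b φ :=
  (lt_sqrt ha).2 (by nlinarith [mul_nonneg (mul_nonneg ha hb.le) hφ])

theorem ell_lt_ell_add_ell {a b c φ ψ χ : ℝ} (ha : 0 ≤ a) (hb : 0 ≤ b) (hc : 0 < c)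
    (hψ : 0 ≤ cos ψ) (hχ : 0 ≤ cos χ) : ell a b φ < ell a c χ + ell b c ψ := by
  linarith [ell_le_add ha hb φ, lt_ell ha hc hχ, lt_ell hb hc hψ]

theorem one_sub_sq_cosine {A C b : ℝ} (hA : 0 < A) (hb : 0 < b) :
    1 - ((A + b ^ 2 - C) / (2 * √A * b)) ^ 2 = heron A (b ^ 2) C / (2 * √A * b) ^ 2 := by
  have hsA : √A ^ 2 = A := sq_sqrt hA.le
  field_simp
  rw [hsA]
  unfold heron; ring

theorem innerAngle_sqrt {A C : ℝ} (hA : 0 ≤ A) (hC : 0 ≤ C) (b : ℝ) :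
    innerAngle (√A) b (√C) = arccos ((A + b ^ 2 - C) / (2 * √A * b)) := by
  rw [innerAngle, sq_sqrt hA, sq_sqrt hC]

theorem hasDerivAt_innerAngle_sqrt {p q : ℝ → ℝ} {p' q' x b : ℝ}
    (hp : HasDerivAt p p' x) (hq : HasDerivAt q q' x) (hpx : 0 < p x) (hqx : 0 < q x)
    (hb : 0 < b) (hQ : 0 < heron (p x) (b ^ 2) (q x)) :
    HasDerivAt (fun y => innerAngle (√(p y)) b (√(q y)))
      ((q' - (p x + q x - b ^ 2) * p' / (2 * p x)) / √(heron (p x) (b ^ 2) (q x))) x := by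
  have hsp : 0 < √(p x) := sqrt_pos.2 hpx
  have hden : 0 < 2 * √(p x) * b := by positivity
  have hcos : HasDerivAt (fun y => (p y + b ^ 2 - q y) / (2 * √(p y) * b))
      (((p' - q') * (2 * √(p x) * b) - (p x + b ^ 2 - q x) * (2 * (p' / (2 * √(p x))) * b))
        / (2 * √(p x) * b) ^ 2) x :=
    ((hp.add_const _).sub hq).div (((hp.sqrt hpx.ne').const_mul 2).mul_const b) hden.ne'
  have hsin := one_sub_sq_cosine (C := q x) hpx hb
  have hsin_pos : 0 < 1 - ((p x + b ^ 2 - q x) / (2 * √(p x) * b)) ^ 2 := by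
    rw [hsin]; positivity
  have harccos := (hasDerivAt_arccos (x := (p x + b ^ 2 - q x) / (2 * √(p x) * b))
    (by rintro h; rw [h] at hsin_pos; norm_num at hsin_pos)
    (by rintro h; rw [h] at hsin_pos; norm_num at hsin_pos)).comp x hcos
  have heq : (fun y => innerAngle (√(p y)) b (√(q y))) =ᶠ[𝓝 x]
      fun y => arccos ((p y + b ^ 2 - q y) / (2 * √(p y) * b)) := by
    filter_upwards [hp.continuousAt.eventually (eventually_gt_nhds hpx),
      hq.continuousAt.eventually (eventually_gt_nhds hqx)] with y hpy hqy
    exact innerAngle_sqrt hpy.le hqy.le b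
  refine (harccos.congr_of_eventuallyEq heq).congr_deriv ?_
  rw [hsin, sqrt_div' _ (sq_nonneg _), sqrt_sq hden.le]
  set s := √(p x)
  rw [show p x = s ^ 2 from (sq_sqrt hpx.le).symm]
  field_simp
  ring

theorem hasDerivAt_ell_sq_right (a φ x : ℝ) :
    HasDerivAt (fun y => a ^ 2 + y ^ 2 + 2 * a * y * cos φ) (2 * x + 2 * a * cos φ) x := by
  refine (((hasDerivAt_pow 2 x).const_add (a ^ 2)).add
    (((hasDerivAt_id' x).const_mul (2 * a)).mul_const (cos φ))).congr_deriv ?_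
  norm_num

theorem hasDerivAt_ell_sq_left (c ψ x : ℝ) :
    HasDerivAt (fun y => y ^ 2 + c ^ 2 + 2 * y * c * cos ψ) (2 * x + 2 * c * cos ψ) x := by
  convert hasDerivAt_ell_sq_right c ψ x using 1
  ext y; ring

theorem mul_deriv_innerAngle_ell {a x c φ ψ χ : ℝ} (ha : 0 < a) (hx : 0 < x) (hc : 0 < c)
    (hφ : 0 ≤ cos φ) (hψ : 0 ≤ cos ψ) (hχ : 0 ≤ cos χ) :
    x * deriv (fun y => innerAngle (ell a y φ) (ell a c χ) (ell y c ψ)) x =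
      (ell a x φ ^ 2 * (ell a c χ ^ 2 + ell x c ψ ^ 2 - ell a x φ ^ 2)
        + ell a x φ ^ 2 * (a ^ 2 + x ^ 2 - 2 * c ^ 2)
        + (x ^ 2 - a ^ 2) * (ell a c χ ^ 2 - ell x c ψ ^ 2))
      / (2 * ell a x φ ^ 2 * √(heron (ell a x φ ^ 2) (ell a c χ ^ 2) (ell x c ψ ^ 2))) := by
  have hA : 0 < ell a x φ := ha.trans (lt_ell ha.le hx hφ)
  have hB : 0 < ell a c χ := ha.trans (lt_ell ha.le hc hχ)
  have hC : 0 < ell x c ψ := hx.trans (lt_ell hx.le hc hψ)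
  have hQ : 0 < heron (ell a x φ ^ 2) (ell a c χ ^ 2) (ell x c ψ ^ 2) :=
    heron_sq_pos (ell_lt_ell_add_ell ha.le hx.le hc hψ hχ)
      (by rw [← ell_comm c x]; exact ell_lt_ell_add_ell ha.le hc.le hx hψ hφ)
      (by rw [ell_comm a x, ell_comm a c]; exact ell_lt_ell_add_ell hx.le hc.le ha hχ hφ)
  have hderiv : HasDerivAt (fun y => innerAngle (ell a y φ) (ell a c χ) (ell y c ψ)) _ x :=
    hasDerivAt_innerAngle_sqrt (hasDerivAt_ell_sq_right a φ x) (hasDerivAt_ell_sq_left c ψ x)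
      (by rw [← ell_sq]; exact pow_pos hA 2) (by rw [← ell_sq]; exact pow_pos hC 2) hB
      (by rw [← ell_sq, ← ell_sq]; exact hQ)
  rw [hderiv.deriv]
  have hsQ := sqrt_pos.2 hQ
  have hA2 := pow_pos hA 2
  simp only [ell_sq] at hA2 hsQ ⊢
  field_simp
  ring

/-- The symmetry `r_j ∂θ_i^{jk}/∂r_j = r_i ∂θ_j^{ik}/∂r_i`. -/
theorem angle_deriv_symm
    (ri rj rk Φij Φjk Φik : ℝ)
    (hri : 0 < ri) (hrj : 0 < rj) (hrk : 0 < rk)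
    (hΦij : Φij ∈ Set.Icc 0 (π / 2)) (hΦjk : Φjk ∈ Set.Icc 0 (π / 2))
    (hΦik : Φik ∈ Set.Icc 0 (π / 2)) :
    rj * deriv (fun x => innerAngle (ell ri x Φij) (ell ri rk Φik) (ell x rk Φjk)) rj =
    ri * deriv (fun x => innerAngle (ell x rj Φij) (ell rj rk Φjk) (ell x rk Φik)) ri := by
  have cos_nonneg : ∀ {Φ : ℝ}, Φ ∈ Set.Icc 0 (π / 2) → 0 ≤ cos Φ := fun hΦ =>
    cos_nonneg_of_mem_Icc ⟨by linarith [hΦ.1, pi_pos], hΦ.2⟩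
  have hswap : (fun x => innerAngle (ell x rj Φij) (ell rj rk Φjk) (ell x rk Φik)) =
      fun x => innerAngle (ell rj x Φij) (ell rj rk Φjk) (ell x rk Φik) := by
    funext x; rw [ell_comm x rj]
  rw [hswap, mul_deriv_innerAngle_ell hri hrj hrk (cos_nonneg hΦij) (cos_nonneg hΦjk)
    (cos_nonneg hΦik), mul_deriv_innerAngle_ell hrj hri hrk (cos_nonneg hΦij)
    (cos_nonneg hΦik) (cos_nonneg hΦjk), ell_comm rj ri, heron_comm_right]
  ring
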